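/- Let K ⊆ D_k be a compact convex set of states which is invariant under conjugation by the discrete Weyl operators: W_{a,b} K W_{a,b}* = K for all (a,b) ∈ Z_k × Z_k. Then χ(K) = log k − S^min(K). -/

import Mathlib

open Matrix ComplexOrder

/-- The von Neumann entropy of a (Hermitian) matrix, via its eigenvalues. -/
noncomputable def vnEntropy {k : ℕ} [NeZero k] (A : Matrix (ZMod k) (ZMod k) ℂ) : ℝ :=
  if h : A.IsHermitian then -∑ i, h.eigenvalues i * Real.log (h.eigenvalues i) else 0

/-- The minimum output entropy of a set of states. -/
noncomputable def Smin {k : ℕ} [NeZero k] (K : Set (Matrix (ZMod k) (ZMod k) ℂ)) : ℝ :=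
  sInf (vnEntropy '' K)

/-- The Holevo quantity of a set of states. -/
noncomputable def holevo {k : ℕ} [NeZero k] (K : Set (Matrix (ZMod k) (ZMod k) ℂ)) : ℝ :=
  sSup {t : ℝ | ∃ (m : ℕ) (p : Fin m → ℝ) (X : Fin m → Matrix (ZMod k) (ZMod k) ℂ),
    (∀ i, 0 ≤ p i) ∧ (∑ i, p i = 1) ∧ (∀ i, X i ∈ K) ∧
    t = vnEntropy (∑ i, p i • X i) - ∑ i, p i * vnEntropy (X i)}

/-- The discrete Weyl operators `W_{a,b} = X^a Y^b` on `ℂ^k`: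
`W_{a,b} e_l = exp(2πi b l / k) e_{l+a}`. -/
noncomputable def weyl {k : ℕ} [NeZero k] (a b : ZMod k) : Matrix (ZMod k) (ZMod k) ℂ :=
  Matrix.of fun i j =>
    if i = j + a then Complex.exp (2 * Real.pi * Complex.I * ((b.val * j.val : ℕ) : ℂ) / k)
    else 0

/-! ### Auxiliary lemmas -/

open Polynomial in
lemma aux_charpoly_diag {n : Type*} [Fintype n] [DecidableEq n] (d : n → ℂ) :
    (Matrix.diagonal d).charpoly = ∏ i, (X - C (d i)) := by
  have h : charmatrix (Matrix.diagonal d) = Matrix.diagonal (fun i => (X : ℂ[X]) - C (d i)) := by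
    ext i j
    by_cases hij : i = j
    · subst hij; simp [charmatrix_apply_eq, Matrix.diagonal_apply_eq]
    · simp [charmatrix_apply_ne _ _ _ hij, Matrix.diagonal_apply_ne _ hij]
  rw [Matrix.charpoly, h, Matrix.det_diagonal]

open Polynomial in
lemma aux_charpoly_conj {n : Type*} [Fintype n] [DecidableEq n]
    (U A : Matrix n n ℂ) (hU : U * Uᴴ = 1) :
    (U * A * Uᴴ).charpoly = A.charpoly := by
  set f := ((C : ℂ →+* ℂ[X]).mapMatrix : Matrix n n ℂ →+* Matrix n n ℂ[X]) with hf
  have hsc : ∀ M : Matrix n n ℂ[X], M * scalar n X = scalar n X * M := fun M =>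
    (Matrix.scalar_commute X (fun r => Commute.all _ _) M).eq.symm
  have key : charmatrix (U * A * Uᴴ) = f U * charmatrix A * f Uᴴ := by
    rw [charmatrix, charmatrix, Matrix.mul_sub, Matrix.sub_mul]
    congr 1
    · rw [mul_assoc, ← hsc, ← mul_assoc, ← _root_.map_mul, hU, _root_.map_one, one_mul]
    · show f (U * A * Uᴴ) = f U * f A * f Uᴴ
      rw [_root_.map_mul, _root_.map_mul]
  have hdet : (f U).det * (f Uᴴ).det = 1 := by
    rw [← Matrix.det_mul, ← _root_.map_mul, hU, _root_.map_one, Matrix.det_one]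
  rw [Matrix.charpoly, key, Matrix.det_mul, Matrix.det_mul, Matrix.charpoly]
  calc (f U).det * (charmatrix A).det * (f Uᴴ).det
      = (f U).det * (f Uᴴ).det * (charmatrix A).det := by ring
    _ = (charmatrix A).det := by rw [hdet, one_mul]

open Polynomial in
lemma aux_roots_eq_eigs {n : Type*} [Fintype n] [DecidableEq n] {A : Matrix n n ℂ}
    (hA : A.IsHermitian) :
    A.charpoly.roots = Finset.univ.val.map (fun i => ((hA.eigenvalues i : ℝ) : ℂ)) := by
  have hV : (hA.eigenvectorUnitary : Matrix n n ℂ) * (hA.eigenvectorUnitary : Matrix n n ℂ)ᴴ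
      = 1 := by
    rw [← Matrix.star_eq_conjTranspose]
    exact (Matrix.mem_unitaryGroup_iff).mp hA.eigenvectorUnitary.2
  have h1 : A.charpoly = (Matrix.diagonal (RCLike.ofReal ∘ hA.eigenvalues)).charpoly := by
    conv_lhs => rw [hA.spectral_theorem]
    rw [Unitary.conjStarAlgAut_apply, Matrix.star_eq_conjTranspose]
    exact aux_charpoly_conj _ _ hV
  have h2 : (Multiset.map (fun i => (X:ℂ[X]) - C ((RCLike.ofReal ∘ hA.eigenvalues) i))
        Finset.univ.val)
      = Multiset.map (fun a => X - C a)
        (Multiset.map (fun i => ((hA.eigenvalues i : ℝ) : ℂ)) Finset.univ.val) := by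
    rw [Multiset.map_map]; rfl
  rw [h1, aux_charpoly_diag, Finset.prod_eq_multiset_prod, h2, roots_multiset_prod_X_sub_C]

/-- The summand in the entropy, as a function of a complex eigenvalue. -/
noncomputable def entF (z : ℂ) : ℝ := z.re * Real.log z.re

lemma aux_vnEntropy_eq {k : ℕ} [NeZero k] {A : Matrix (ZMod k) (ZMod k) ℂ}
    (hA : A.IsHermitian) :
    vnEntropy A = -((A.charpoly.roots.map entF).sum) := by
  rw [vnEntropy, dif_pos hA, aux_roots_eq_eigs hA, Multiset.map_map, Finset.sum]
  norm_num [entF, Function.comp]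

lemma aux_vnEntropy_conj {k : ℕ} [NeZero k] {A : Matrix (ZMod k) (ZMod k) ℂ}
    (hA : A.IsHermitian) (U : Matrix (ZMod k) (ZMod k) ℂ) (hU : U * Uᴴ = 1) :
    vnEntropy (U * A * Uᴴ) = vnEntropy A := by
  have hB : (U * A * Uᴴ).IsHermitian := by
    unfold Matrix.IsHermitian
    rw [conjTranspose_mul, conjTranspose_mul, conjTranspose_conjTranspose, hA.eq, mul_assoc]
  rw [aux_vnEntropy_eq hB, aux_vnEntropy_eq hA, aux_charpoly_conj _ _ hU]

lemma aux_trace_eq_sum_eigs {k : ℕ} [NeZero k] {A : Matrix (ZMod k) (ZMod k) ℂ}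
    (hA : A.IsHermitian) : A.trace = ∑ i, (hA.eigenvalues i : ℂ) := by
  rw [Matrix.trace_eq_sum_roots_charpoly, aux_roots_eq_eigs hA, Finset.sum]

lemma aux_neg_sum_mul_log_le {ι : Type*} (s : Finset ι) (l : ι → ℝ)
    (h0 : ∀ i ∈ s, 0 ≤ l i) (h1 : ∑ i ∈ s, l i = 1) :
    -∑ i ∈ s, l i * Real.log (l i) ≤ Real.log s.card := by
  classical
  set t := s.filter (fun i => l i ≠ 0) with ht
  have hts : t ⊆ s := Finset.filter_subset _ _
  have hpos : ∀ i ∈ t, 0 < l i := by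
    intro i hi
    rcases Finset.mem_filter.mp hi with ⟨his, hne⟩
    exact lt_of_le_of_ne (h0 i his) (Ne.symm hne)
  have h1t : ∑ i ∈ t, l i = 1 := by
    rw [← h1]
    exact Finset.sum_filter_ne_zero s
  have hrw : -∑ i ∈ s, l i * Real.log (l i) = ∑ i ∈ t, l i • Real.log ((l i)⁻¹) := by
    rw [show ∑ i ∈ s, l i * Real.log (l i) = ∑ i ∈ t, l i * Real.log (l i) by
      refine (Finset.sum_filter_of_ne ?_).symm
      intro i _ h hzero
      rw [hzero] at h
      simp at h]
    rw [← Finset.sum_neg_distrib]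
    apply Finset.sum_congr rfl
    intro i hi
    rw [Real.log_inv, smul_eq_mul]
    ring
  have hjen := (strictConcaveOn_log_Ioi.concaveOn).le_map_sum
    (t := t) (w := l) (p := fun i => (l i)⁻¹)
    (fun i hi => (hpos i hi).le) h1t
    (fun i hi => Set.mem_Ioi.mpr (inv_pos.mpr (hpos i hi)))
  have hsum : ∑ i ∈ t, l i • (l i)⁻¹ = (t.card : ℝ) := by
    rw [Finset.cast_card]
    apply Finset.sum_congr rfl
    intro i hi
    rw [smul_eq_mul, mul_inv_cancel₀ (hpos i hi).ne']
  rw [hrw]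
  refine hjen.trans ?_
  rw [hsum]
  have htne : t.Nonempty := by
    by_contra h
    rw [Finset.not_nonempty_iff_eq_empty] at h
    rw [h, Finset.sum_empty] at h1t
    norm_num at h1t
  have : (0:ℝ) < t.card := by exact_mod_cast Finset.card_pos.mpr htne
  exact Real.log_le_log this (by exact_mod_cast Finset.card_le_card hts)

lemma aux_sum_mul_log_nonpos {ι : Type*} (s : Finset ι) (l : ι → ℝ)
    (h0 : ∀ i ∈ s, 0 ≤ l i) (h1 : ∑ i ∈ s, l i = 1) :
    ∑ i ∈ s, l i * Real.log (l i) ≤ 0 := by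
  apply Finset.sum_nonpos
  intro i hi
  have hle1 : l i ≤ 1 := h1 ▸ Finset.single_le_sum h0 hi
  exact mul_nonpos_of_nonneg_of_nonpos (h0 i hi) (Real.log_nonpos (h0 i hi) hle1)

lemma aux_eigs_sum_one {k : ℕ} [NeZero k] {A : Matrix (ZMod k) (ZMod k) ℂ}
    (hA : A.PosSemidef) (htr : A.trace = 1) :
    ∑ i, hA.1.eigenvalues i = 1 := by
  have h := aux_trace_eq_sum_eigs hA.1
  rw [htr] at h
  have : ((∑ i, hA.1.eigenvalues i : ℝ) : ℂ) = 1 := by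
    push_cast
    exact h.symm
  exact_mod_cast this

lemma aux_ent_nonneg {k : ℕ} [NeZero k] {A : Matrix (ZMod k) (ZMod k) ℂ}
    (hA : A.PosSemidef) (htr : A.trace = 1) : 0 ≤ vnEntropy A := by
  rw [vnEntropy, dif_pos hA.1, neg_nonneg]
  exact aux_sum_mul_log_nonpos _ _ (fun i _ => hA.eigenvalues_nonneg i) (aux_eigs_sum_one hA htr)

lemma aux_ent_le_log {k : ℕ} [NeZero k] {A : Matrix (ZMod k) (ZMod k) ℂ}
    (hA : A.PosSemidef) (htr : A.trace = 1) : vnEntropy A ≤ Real.log k := by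
  rw [vnEntropy, dif_pos hA.1]
  have := aux_neg_sum_mul_log_le Finset.univ hA.1.eigenvalues
    (fun i _ => hA.eigenvalues_nonneg i) (aux_eigs_sum_one hA htr)
  rwa [Finset.card_univ, ZMod.card] at this

open Polynomial in
/-- The entropy of the maximally mixed state. -/
lemma aux_ent_max_mixed (k : ℕ) [NeZero k] :
    vnEntropy (((k : ℂ))⁻¹ • (1 : Matrix (ZMod k) (ZMod k) ℂ)) = Real.log k := by
  have hk : (k:ℝ) ≠ 0 := Nat.cast_ne_zero.mpr (NeZero.ne k)
  have hstar : star ((k:ℂ))⁻¹ = ((k:ℂ))⁻¹ := by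
    rw [star_inv₀]
    norm_cast
  have hdiag : ((k : ℂ))⁻¹ • (1 : Matrix (ZMod k) (ZMod k) ℂ)
      = Matrix.diagonal (fun _ => (k:ℂ)⁻¹) := by
    ext i j
    by_cases hij : i = j
    · subst hij; simp
    · simp [Matrix.one_apply_ne hij, Matrix.diagonal_apply_ne _ hij]
  have hherm : (((k : ℂ))⁻¹ • (1 : Matrix (ZMod k) (ZMod k) ℂ)).IsHermitian := by
    unfold Matrix.IsHermitian
    rw [Matrix.conjTranspose_smul, Matrix.conjTranspose_one, hstar]
  rw [aux_vnEntropy_eq hherm]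
  have h2 : (Multiset.map (fun _ : ZMod k => (X:ℂ[X]) - C ((k:ℂ)⁻¹)) Finset.univ.val)
      = Multiset.map (fun a => X - C a)
        (Multiset.map (fun _ : ZMod k => (k:ℂ)⁻¹) Finset.univ.val) := by
    rw [Multiset.map_map]
    rfl
  have hroots : (((k : ℂ))⁻¹ • (1 : Matrix (ZMod k) (ZMod k) ℂ)).charpoly.roots
      = Multiset.map (fun _ => (k:ℂ)⁻¹) (Finset.univ.val : Multiset (ZMod k)) := by
    rw [hdiag, aux_charpoly_diag, Finset.prod_eq_multiset_prod, h2,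
      roots_multiset_prod_X_sub_C]
  rw [hroots, Multiset.map_map]
  rw [show (entF ∘ fun _ : ZMod k => ((k:ℂ))⁻¹) = fun _ : ZMod k => entF ((k:ℂ))⁻¹ from rfl]
  rw [Multiset.map_const', Multiset.sum_replicate]
  have hcard : Multiset.card (Finset.univ.val : Multiset (ZMod k)) = k := by
    change (Finset.univ : Finset (ZMod k)).card = k
    rw [Finset.card_univ, ZMod.card]
  rw [hcard, nsmul_eq_mul]
  have hre : ((k:ℂ)⁻¹).re = (k:ℝ)⁻¹ := by
    rw [show ((k:ℂ)) = (((k:ℝ)):ℂ) from by push_cast; rfl, ← Complex.ofReal_inv,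
      Complex.ofReal_re]
  rw [entF, hre, Real.log_inv]
  field_simp

/-! ### Weyl operator computations -/

/-- `exp(2πi m / k)`. -/
noncomputable def zet (k : ℕ) (m : ℤ) : ℂ := Complex.exp (2 * Real.pi * Complex.I * m / k)

lemma zet_add (k : ℕ) (m n : ℤ) : zet k (m + n) = zet k m * zet k n := by
  rw [zet, zet, zet, ← Complex.exp_add]
  congr 1
  push_cast
  ring

lemma zet_zero (k : ℕ) : zet k 0 = 1 := by simp [zet]

lemma conj_zet (k : ℕ) (m : ℤ) : (starRingEnd ℂ) (zet k m) = zet k (-m) := by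
  rw [zet, zet, ← Complex.exp_conj]
  congr 1
  simp only [map_div₀, _root_.map_mul, Complex.conj_I, map_intCast, map_natCast, map_ofNat,
    Complex.conj_ofReal]
  push_cast
  ring

lemma zet_pow (k : ℕ) (m : ℤ) (n : ℕ) : zet k (n * m) = (zet k m) ^ n := by
  induction n with
  | zero => simp [zet_zero]
  | succ n ih =>
    have : ((n:ℤ) + 1) * m = n * m + m := by ring
    push_cast
    rw [this, zet_add, ih, pow_succ]

lemma zet_eq_one_iff (k : ℕ) [NeZero k] (m : ℤ) : zet k m = 1 ↔ (k:ℤ) ∣ m := by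
  have hk : (k:ℂ) ≠ 0 := by exact_mod_cast (NeZero.ne k)
  rw [zet, Complex.exp_eq_one_iff]
  constructor
  · rintro ⟨n, hn⟩
    refine ⟨n, ?_⟩
    have h2 : (2 * (Real.pi:ℂ) * Complex.I) ≠ 0 := by
      simp [Real.pi_ne_zero, Complex.I_ne_zero]
    field_simp at hn
    have h3 : (2 * (Real.pi:ℂ) * Complex.I) * m = (2 * (Real.pi:ℂ) * Complex.I) * (k * n) := by
      linear_combination (2 * (Real.pi:ℂ) * Complex.I) * hn
    have h4 : (m : ℂ) = ((k * n : ℤ) : ℂ) := by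
      have := mul_left_cancel₀ h2 h3
      push_cast
      exact this
    exact_mod_cast h4
  · rintro ⟨c, rfl⟩
    refine ⟨c, ?_⟩
    push_cast
    field_simp

lemma zet_sum (k : ℕ) [NeZero k] (m : ℤ) :
    ∑ b : ZMod k, zet k (b.val * m) = if (k:ℤ) ∣ m then (k:ℂ) else 0 := by
  have hsum : ∑ b : ZMod k, zet k (b.val * m) = ∑ n ∈ Finset.range k, (zet k m) ^ n := by
    rw [← Finset.sum_attach (Finset.range k) (fun n => (zet k m) ^ n)]
    refine Finset.sum_bij (fun b _ => ⟨b.val, Finset.mem_range.mpr (ZMod.val_lt b)⟩) ?_ ?_ ?_ ?_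
    · intros; exact Finset.mem_attach _ _
    · intro a _ b _ h
      simp only [Subtype.mk.injEq] at h
      exact ZMod.val_injective k h
    · rintro ⟨n, hn⟩ _
      exact ⟨(n : ZMod k), Finset.mem_univ _, by
        simp [ZMod.val_cast_of_lt (Finset.mem_range.mp hn)]⟩
    · intro b _
      rw [zet_pow]
  rw [hsum]
  by_cases h : zet k m = 1
  · rw [if_pos ((zet_eq_one_iff k m).mp h)]
    simp [h]
  · rw [if_neg (fun hd => h ((zet_eq_one_iff k m).mpr hd))]
    rw [geom_sum_eq h]
    have : zet k m ^ k = 1 := by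
      rw [← zet_pow, zet_eq_one_iff]
      exact Dvd.intro m rfl
    rw [this, sub_self, zero_div]

lemma weyl_apply {k : ℕ} [NeZero k] (a b : ZMod k) (i j : ZMod k) :
    weyl a b i j = if i = j + a then zet k (b.val * j.val) else 0 := by
  rw [weyl, zet]
  simp only [Matrix.of_apply]
  congr 2

lemma zet_mul_conj (k : ℕ) (m n : ℤ) : zet k m * (starRingEnd ℂ) (zet k n) = zet k (m - n) := by
  rw [conj_zet, ← zet_add, sub_eq_add_neg]

lemma weyl_unitary {k : ℕ} [NeZero k] (a b : ZMod k) : weyl a b * (weyl a b)ᴴ = 1 := by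
  ext i j
  rw [Matrix.mul_apply]
  simp only [Matrix.conjTranspose_apply, weyl_apply, RCLike.star_def]
  rw [Finset.sum_eq_single (i - a)]
  · by_cases hij : i = j
    · subst hij
      simp only [sub_add_cancel, if_pos rfl, Matrix.one_apply_eq, if_true]
      rw [zet_mul_conj, sub_self, zet_zero]
    · rw [if_pos (by ring), if_neg (fun h : j = i - a + a => hij (by rw [h]; ring)),
        map_zero, mul_zero, Matrix.one_apply_ne (fun h => hij h)]
  · intro l _ hl
    rw [if_neg (fun h : i = l + a => hl (by rw [h]; ring)), zero_mul]
  · intro h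
    exact absurd (Finset.mem_univ _) h

lemma weyl_conj_apply {k : ℕ} [NeZero k] (a b : ZMod k) (M : Matrix (ZMod k) (ZMod k) ℂ)
    (i j : ZMod k) :
    (weyl a b * M * (weyl a b)ᴴ) i j
      = zet k (b.val * ((i - a).val - (j - a).val)) * M (i - a) (j - a) := by
  rw [Matrix.mul_apply]
  rw [Finset.sum_eq_single (j - a)]
  · rw [Matrix.mul_apply, Finset.sum_eq_single (i - a)]
    · simp only [Matrix.conjTranspose_apply, weyl_apply, RCLike.star_def]
      rw [if_pos (by ring : i = i - a + a), apply_ite (starRingEnd ℂ), map_zero,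
        if_pos (by ring : j = j - a + a)]
      rw [mul_comm (zet k _) (M _ _), mul_assoc, zet_mul_conj]
      rw [mul_comm]
      congr 2
      ring
    · intro l _ hl
      rw [weyl_apply, if_neg (fun h : i = l + a => hl (by rw [h]; ring)), zero_mul]
    · intro h; exact absurd (Finset.mem_univ _) h
  · intro l _ hl
    simp only [Matrix.conjTranspose_apply, weyl_apply, RCLike.star_def]
    rw [apply_ite (starRingEnd ℂ), map_zero,
      if_neg (fun h : j = l + a => hl (by rw [h]; ring)), mul_zero]
  · intro h; exact absurd (Finset.mem_univ _) h

lemma zmod_dvd_iff {k : ℕ} [NeZero k] (i j a : ZMod k) :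
    (k:ℤ) ∣ (((i - a).val : ℤ) - ((j - a).val : ℤ)) ↔ i = j := by
  constructor
  · intro hd
    have h1 : ((i - a).val : ℤ) - ((j - a).val : ℤ) = 0 := by
      apply Int.eq_zero_of_dvd_of_natAbs_lt_natAbs hd
      have b1 := ZMod.val_lt (i - a)
      have b2 := ZMod.val_lt (j - a)
      rw [Int.natAbs_natCast]
      omega
    have h2 : (i - a).val = (j - a).val := by omega
    have h3 : i - a = j - a := ZMod.val_injective k h2
    have := congrArg (fun x => x + a) h3
    simpa using this
  · rintro rfl
    simp

lemma weyl_avg {k : ℕ} [NeZero k] (M : Matrix (ZMod k) (ZMod k) ℂ) (hM : M.trace = 1) :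
    ∑ a : ZMod k, ∑ b : ZMod k, weyl a b * M * (weyl a b)ᴴ = (k : ℂ) • 1 := by
  ext i j
  simp only [Matrix.sum_apply, weyl_conj_apply, Matrix.smul_apply]
  have hinner : ∀ a : ZMod k,
      ∑ b : ZMod k, zet k (b.val * (((i - a).val : ℤ) - ((j - a).val : ℤ))) * M (i - a) (j - a)
      = (if i = j then (k:ℂ) else 0) * M (i - a) (j - a) := by
    intro a
    rw [← Finset.sum_mul, zet_sum]
    exact congrArg (· * M (i - a) (j - a)) (if_congr (zmod_dvd_iff i j a) rfl rfl)
  rw [Finset.sum_congr rfl (fun a _ => hinner a)]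
  by_cases hij : i = j
  · subst hij
    rw [Matrix.one_apply_eq, smul_eq_mul, mul_one]
    simp only [if_pos rfl]
    rw [← Finset.mul_sum]
    have : ∑ a : ZMod k, M (i - a) (i - a) = M.trace := by
      rw [Matrix.trace]
      exact Fintype.sum_equiv (Equiv.subLeft i) _ _ (fun a => rfl)
    rw [this, hM, mul_one]
    simp
  · simp only [if_neg hij, zero_mul, Finset.sum_const_zero]
    rw [Matrix.one_apply_ne hij, smul_zero]

/-! ### The main theorem -/

/-- if a compact convex set of states `K ⊆ D_k` is invariant under conjugation
by the discrete Weyl operators, then `χ(K) = log k − S^min(K)`. -/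
theorem stmt12 (k : ℕ) [NeZero k] (K : Set (Matrix (ZMod k) (ZMod k) ℂ))
    (hKD : K ⊆ {A | A.PosSemidef ∧ A.trace = 1})
    (hKcomp : IsCompact K) (hKconv : Convex ℝ K) (hKne : K.Nonempty)
    (hinv : ∀ a b : ZMod k, (fun M => weyl a b * M * (weyl a b)ᴴ) '' K = K) :
    holevo K = Real.log k - Smin K := by
  classical
  have hk : (k:ℝ) ≠ 0 := Nat.cast_ne_zero.mpr (NeZero.ne k)
  set S : Set ℝ := {t : ℝ | ∃ (m : ℕ) (p : Fin m → ℝ) (X : Fin m → Matrix (ZMod k) (ZMod k) ℂ),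
    (∀ i, 0 ≤ p i) ∧ (∑ i, p i = 1) ∧ (∀ i, X i ∈ K) ∧
    t = vnEntropy (∑ i, p i • X i) - ∑ i, p i * vnEntropy (X i)} with hS
  have hholevo : holevo K = sSup S := rfl
  -- conjugation stays in K
  have hconjmem : ∀ (a b : ZMod k) (ρ), ρ ∈ K → weyl a b * ρ * (weyl a b)ᴴ ∈ K := by
    intro a b ρ hρ
    rw [← hinv a b]
    exact ⟨ρ, hρ, rfl⟩
  -- Key 1: membership of log k - S(ρ)
  have key1 : ∀ ρ ∈ K, Real.log k - vnEntropy ρ ∈ S := by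
    intro ρ hρ
    obtain ⟨hpsd, htr⟩ := hKD hρ
    have hcard : Fintype.card (Fin (k*k)) = Fintype.card (ZMod k × ZMod k) := by
      simp [ZMod.card]
    set e : Fin (k*k) ≃ ZMod k × ZMod k := Fintype.equivOfCardEq hcard with he
    refine ⟨k*k, fun _ => ((k*k : ℕ) : ℝ)⁻¹,
      fun i => weyl (e i).1 (e i).2 * ρ * (weyl (e i).1 (e i).2)ᴴ, ?_, ?_, ?_, ?_⟩
    · intro i; positivity
    · rw [Finset.sum_const, Finset.card_univ, Fintype.card_fin, nsmul_eq_mul]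
      rw [mul_inv_cancel₀]
      push_cast
      positivity
    · intro i
      exact hconjmem _ _ _ hρ
    · have havg : (∑ i : Fin (k*k), ((k*k : ℕ) : ℝ)⁻¹ •
          (weyl (e i).1 (e i).2 * ρ * (weyl (e i).1 (e i).2)ᴴ))
          = ((k:ℂ))⁻¹ • (1 : Matrix (ZMod k) (ZMod k) ℂ) := by
        rw [← Finset.smul_sum]
        have hsum : (∑ i : Fin (k*k), weyl (e i).1 (e i).2 * ρ * (weyl (e i).1 (e i).2)ᴴ)
            = (k : ℂ) • 1 := by
          rw [Equiv.sum_comp e (fun q => weyl q.1 q.2 * ρ * (weyl q.1 q.2)ᴴ),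
            Fintype.sum_prod_type]
          exact weyl_avg ρ htr
        rw [hsum, ← smul_assoc]
        congr 1
        show (((k*k : ℕ) : ℝ)⁻¹ : ℝ) • ((k:ℕ):ℂ) = ((k:ℂ))⁻¹
        rw [Complex.real_smul]
        push_cast
        field_simp
      have hent : ∀ i : Fin (k*k),
          vnEntropy (weyl (e i).1 (e i).2 * ρ * (weyl (e i).1 (e i).2)ᴴ) = vnEntropy ρ :=
        fun i => aux_vnEntropy_conj hpsd.1 _ (weyl_unitary _ _)
      rw [havg, aux_ent_max_mixed k]
      rw [Finset.sum_congr rfl (fun i _ => by rw [hent i])]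
      rw [← Finset.sum_mul, Finset.sum_const, Finset.card_univ, Fintype.card_fin, nsmul_eq_mul]
      rw [mul_inv_cancel₀ (by push_cast; positivity), one_mul]
  -- bounds on entropy over K
  have hent_nonneg : ∀ ρ ∈ K, 0 ≤ vnEntropy ρ := fun ρ hρ =>
    aux_ent_nonneg (hKD hρ).1 (hKD hρ).2
  have hbddB : BddBelow (vnEntropy '' K) := by
    refine ⟨0, ?_⟩
    rintro y ⟨ρ, hρ, rfl⟩
    exact hent_nonneg ρ hρ
  have himne : (vnEntropy '' K).Nonempty := hKne.image _
  -- Key 2: upper bound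
  have key2 : ∀ t ∈ S, t ≤ Real.log k - Smin K := by
    rintro t ⟨m, p, X, h0, h1, hXK, rfl⟩
    have havgK : (∑ i, p i • X i) ∈ K :=
      hKconv.sum_mem (fun i _ => h0 i) h1 (fun i _ => hXK i)
    have hE : vnEntropy (∑ i, p i • X i) ≤ Real.log k :=
      aux_ent_le_log (hKD havgK).1 (hKD havgK).2
    have hS2 : ∀ i, Smin K ≤ vnEntropy (X i) := fun i =>
      csInf_le hbddB (Set.mem_image_of_mem _ (hXK i))
    have hsum : Smin K ≤ ∑ i, p i * vnEntropy (X i) := by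
      calc Smin K = ∑ i, p i * Smin K := by
            rw [← Finset.sum_mul, h1, one_mul]
        _ ≤ ∑ i, p i * vnEntropy (X i) :=
            Finset.sum_le_sum (fun i _ => mul_le_mul_of_nonneg_left (hS2 i) (h0 i))
    linarith
  obtain ⟨ρ₀, hρ₀⟩ := hKne
  have hSne : S.Nonempty := ⟨_, key1 ρ₀ hρ₀⟩
  have hbddS : BddAbove S := ⟨Real.log k - Smin K, key2⟩
  have hle : holevo K ≤ Real.log k - Smin K := by
    rw [hholevo]
    exact csSup_le hSne key2
  have hge : Real.log k - Smin K ≤ holevo K := by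
    have h2 : ∀ y ∈ vnEntropy '' K, Real.log k - holevo K ≤ y := by
      rintro y ⟨ρ, hρ, rfl⟩
      have h3 : Real.log k - vnEntropy ρ ≤ holevo K := by
        rw [hholevo]
        exact le_csSup hbddS (key1 ρ hρ)
      linarith
    have h4 : Real.log k - holevo K ≤ Smin K := le_csInf himne h2
    linarith
  linarith
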